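/- Any subset Γ ⊂ ℤⁿ with positive uniform upper density that satisfies the weak almost periodicity condition (for every ε > 0 there exists R > 0 such that for all x, y ∈ ℝⁿ there is v ∈ ℝⁿ with #((B(x,R)∩Γ) Δ ((B(y,R)∩Γ) − v)) ≤ ε·Vol(B_R)) is a Delone set. -/

import Mathlib

open Filter MeasureTheory Metric Pointwise

variable {E : Type*} [NormedAddCommGroup E] [MeasureSpace E]

/-- The uniform `R`-density of a set. -/
noncomputable def densR (Γ : Set E) (R : ℝ) : ℝ :=
  ⨆ x : E, ((Γ ∩ ball x R).ncard : ℝ) / (volume (ball x R)).toReal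

/-- The uniform upper density of a set. -/
noncomputable def upDens (Γ : Set E) : ℝ := limsup (densR Γ) atTop

/-- Uniformly discrete: balls of radius `r` contain at most one point. -/
def UnifDisc (Γ : Set E) : Prop := ∃ r > 0, ∀ x : E, (Γ ∩ closedBall x r).Subsingleton

/-- Relatively dense: balls of radius `R` contain at least one point. -/
def RelDense (Γ : Set E) : Prop := ∃ R > 0, ∀ x : E, (Γ ∩ closedBall x R).Nonempty

def Delone (Γ : Set E) : Prop := UnifDisc Γ ∧ RelDense Γ

def Meyer (Γ : Set E) : Prop := Delone Γ ∧ Delone (Γ - Γ)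

/-- Frequency of the difference `v` in `Γ`. -/
noncomputable def freq (Γ : Set E) (v : E) : ℝ :=
  upDens {x ∈ Γ | x + v ∈ Γ} / upDens Γ

/-- Weakly almost periodic set. -/
def WAP (Γ : Set E) : Prop :=
  Delone Γ ∧ ∀ ε > 0, ∃ R > 0, ∀ x y : E, ∃ v : E,
    ((symmDiff (Γ ∩ ball x R) ((fun z => z - v) '' (Γ ∩ ball y R))).ncard : ℝ)
      ≤ ε * (volume (ball (0 : E) R)).toReal

/-!
Distinct integer points are at distance at least `1`, so `Γ` is uniformly discrete and hence
locally finite. If `Γ` were not relatively dense, then for the radius `R` attached to a given `ε`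
it would miss some ball `B(y, R)`; comparing any ball `B(z, R)` with that empty ball, weak almost
periodicity leaves at most `ε · vol B_R` points in every ball of radius `R`. Double counting the
pairs (point of `Γ ∩ B(x, R')`, point of space within distance `R` of it) spreads this bound to all
larger radii: `#(Γ ∩ B(x, R')) ≤ ε · vol B(x, R' + R) ≤ 2ⁿ ε · vol B(x, R')` for `R' ≥ R`. So the
upper density is at most `2ⁿ ε`, which is absurd once `2ⁿ ε < upDens Γ`.
-/

open Set Module
open scoped ENNReal

theorem one_le_dist_of_coord_int {ι : Type*} [Fintype ι] {a b : EuclideanSpace ℝ ι}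
    (ha : ∀ i, ∃ m : ℤ, a i = m) (hb : ∀ i, ∃ m : ℤ, b i = m) (hab : a ≠ b) :
    1 ≤ dist a b := by
  obtain ⟨i, hi⟩ : ∃ i, a i ≠ b i := by
    contrapose! hab
    exact PiLp.ext hab
  obtain ⟨ma, hma⟩ := ha i
  obtain ⟨mb, hmb⟩ := hb i
  calc 1 ≤ dist ma mb := Int.pairwise_one_le_dist fun h => hi (by rw [hma, hmb, h])
    _ = dist (a i) (b i) := by rw [hma, hmb, Int.dist_cast_real]
    _ ≤ dist a b := PiLp.dist_apply_le a b i

theorem unifDisc_of_coord_int {ι : Type*} [Fintype ι] {Γ : Set (EuclideanSpace ℝ ι)}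
    (hΓ : ∀ x ∈ Γ, ∀ i, ∃ m : ℤ, x i = m) : UnifDisc Γ := by
  refine ⟨1 / 3, by norm_num, fun x a ha b hb => by_contra fun hab => ?_⟩
  have h1 := one_le_dist_of_coord_int (hΓ a ha.1) (hΓ b hb.1) hab
  have h2 := dist_triangle_right a b x
  linarith [mem_closedBall.mp ha.2, mem_closedBall.mp hb.2]

section NormedGroup

variable {V : Type*} [NormedAddCommGroup V] {Γ : Set V}

theorem UnifDisc.finite_inter_ball [ProperSpace V] (hΓ : UnifDisc Γ) (x : V) (R : ℝ) :
    (Γ ∩ ball x R).Finite := by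
  obtain ⟨r, hr, hsub⟩ := hΓ
  obtain ⟨t, ht, hcover⟩ :=
    totallyBounded_iff.mp (isCompact_closedBall x R).totallyBounded r hr
  refine ((ht.biUnion fun y _ => (hsub y).finite).subset fun γ hγ => ?_)
  obtain ⟨y, hy, hγy⟩ := mem_iUnion₂.mp (hcover (ball_subset_closedBall hγ.2))
  exact mem_iUnion₂.mpr ⟨y, hy, hγ.1, ball_subset_closedBall hγy⟩

theorem exists_inter_ball_eq_empty_of_not_relDense (hΓ : ¬RelDense Γ) {R : ℝ} (hR : 0 < R) :
    ∃ y, Γ ∩ ball y R = ∅ := by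
  simp only [RelDense, not_exists, not_and, not_forall, not_nonempty_iff_eq_empty] at hΓ
  obtain ⟨y, hy⟩ := hΓ R hR
  exact ⟨y, subset_empty_iff.mp (hy ▸ inter_subset_inter_right Γ ball_subset_closedBall)⟩

theorem sum_indicator_ball_le_indicator_ball {x z : V} {R r : ℝ} {K : ℝ≥0∞}
    (hfin : (Γ ∩ ball z r).Finite) (hK : ((Γ ∩ ball z r).ncard : ℝ≥0∞) ≤ K)
    {S : Finset V} (hS : ↑S ⊆ Γ ∩ ball x R) :
    ∑ γ ∈ S, (ball γ r).indicator 1 z ≤ (ball x (R + r)).indicator (fun _ => K) z := by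
  classical
  by_cases hz : z ∈ ball x (R + r)
  · simp only [indicator_of_mem hz, indicator_apply, Pi.one_apply, Finset.sum_boole]
    calc ((S.filter fun γ => z ∈ ball γ r).card : ℝ≥0∞)
        = (((S.filter fun γ => z ∈ ball γ r : Finset V) : Set V).ncard : ℝ≥0∞) := by
          rw [ncard_coe_finset]
      _ ≤ (Γ ∩ ball z r).ncard := by
          refine Nat.cast_le.mpr (ncard_le_ncard (fun γ hγ => ?_) hfin)
          simp only [Finset.coe_filter] at hγ
          exact ⟨(hS hγ.1).1, mem_ball_comm.mp hγ.2⟩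
      _ ≤ K := hK
  · rw [indicator_of_notMem hz]
    refine le_of_eq (Finset.sum_eq_zero fun γ hγ => indicator_of_notMem (fun hzγ => hz ?_) _)
    calc dist z x ≤ dist z γ + dist γ x := dist_triangle _ _ _
      _ < r + R := add_lt_add (mem_ball.mp hzγ) (hS hγ).2
      _ = R + r := add_comm _ _

theorem ncard_inter_ball_le_mul_measure_ball_add [ProperSpace V] [MeasurableSpace V] [BorelSpace V]
    (μ : Measure V) [μ.IsAddHaarMeasure] {x : V} {R r : ℝ} (hr : 0 < r) {ε : ℝ≥0∞}
    (hfin : ∀ z, (Γ ∩ ball z r).Finite)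
    (hsparse : ∀ z, ((Γ ∩ ball z r).ncard : ℝ≥0∞) ≤ ε * μ (ball 0 r))
    (hΓ : (Γ ∩ ball x R).Finite) :
    (Γ ∩ ball x R).ncard ≤ ε * μ (ball x (R + r)) := by
  refine (ENNReal.mul_le_mul_iff_left (measure_ball_pos μ 0 hr).ne'
    measure_ball_lt_top.ne).mp ?_
  calc ((Γ ∩ ball x R).ncard : ℝ≥0∞) * μ (ball 0 r) = ∑ γ ∈ hΓ.toFinset, μ (ball γ r) := by
        simp [ncard_eq_toFinset_card _ hΓ, Measure.addHaar_ball_center]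
    _ = ∫⁻ z, ∑ γ ∈ hΓ.toFinset, (ball γ r).indicator 1 z ∂μ := by
        rw [lintegral_finsetSum _ fun γ _ => measurable_one.indicator measurableSet_ball]
        simp [lintegral_indicator_one measurableSet_ball]
    _ ≤ ∫⁻ z, (ball x (R + r)).indicator (fun _ => ε * μ (ball 0 r)) z ∂μ :=
        lintegral_mono fun z =>
          sum_indicator_ball_le_indicator_ball (hfin z) (hsparse z) (by simp)
    _ = ε * μ (ball x (R + r)) * μ (ball 0 r) := by
        rw [lintegral_indicator_const measurableSet_ball, mul_right_comm]

end NormedGroup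

theorem densR_nonneg (Γ : Set E) (R : ℝ) : 0 ≤ densR Γ R :=
  Real.iSup_nonneg fun _ => div_nonneg (Nat.cast_nonneg _) ENNReal.toReal_nonneg

theorem upDens_le_of_eventually {Γ : Set E} {a : ℝ} (ha : 0 ≤ a)
    (h : ∀ᶠ R in atTop, ∀ x, ((Γ ∩ ball x R).ncard : ℝ) ≤ a * (volume (ball x R)).toReal) :
    upDens Γ ≤ a :=
  limsup_le_of_le (isCoboundedUnder_le_of_le atTop (densR_nonneg Γ)) <| h.mono fun _ hR =>
    Real.iSup_le (fun x => div_le_of_le_mul₀ ENNReal.toReal_nonneg ha (hR x)) ha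

section FiniteDimensional

variable [NormedSpace ℝ E] [FiniteDimensional ℝ E] [BorelSpace E]
  [(volume : Measure E).IsAddHaarMeasure]

theorem volume_ball_add_le_two_pow_mul (x : E) {R r : ℝ} (hrR : r ≤ R) :
    volume (ball x (R + r)) ≤ ENNReal.ofReal (2 ^ finrank ℝ E) * volume (ball x R) :=
  calc volume (ball x (R + r)) ≤ volume (ball x (2 * R)) :=
        measure_mono (ball_subset_ball (by linarith))
    _ = _ := by
      rw [Measure.addHaar_ball_mul_of_pos _ _ two_pos, Measure.addHaar_ball_center volume x]

theorem relDense_of_wap {Γ : Set E} (hfin : ∀ x r, (Γ ∩ ball x r).Finite)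
    (hdens : 0 < upDens Γ)
    (hwap : ∀ ε > 0, ∃ R > 0, ∀ x y : E, ∃ v : E,
      ((symmDiff (Γ ∩ ball x R) ((fun z => z - v) '' (Γ ∩ ball y R))).ncard : ℝ)
        ≤ ε * (volume (ball (0 : E) R)).toReal) :
    RelDense Γ := by
  by_contra hRD
  set ε := upDens Γ / 2 ^ (finrank ℝ E + 1)
  have hε : 0 < ε := by positivity
  obtain ⟨R, hR, hP⟩ := hwap ε hε
  obtain ⟨y, hy⟩ := exists_inter_ball_eq_empty_of_not_relDense hRD hR
  have hsparse (z : E) :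
      ((Γ ∩ ball z R).ncard : ℝ≥0∞) ≤ ENNReal.ofReal ε * volume (ball (0 : E) R) := by
    obtain ⟨v, hv⟩ := hP z y
    rw [hy, image_empty, ← bot_eq_empty, symmDiff_bot] at hv
    rw [← ENNReal.ofReal_natCast, ← ENNReal.ofReal_toReal measure_ball_lt_top.ne,
      ← ENNReal.ofReal_mul hε.le]
    exact ENNReal.ofReal_le_ofReal hv
  have hcount : ∀ R' ≥ R, ∀ x,
      ((Γ ∩ ball x R').ncard : ℝ) ≤ ε * 2 ^ finrank ℝ E * (volume (ball x R')).toReal := by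
    intro R' hR' x
    have h := (ncard_inter_ball_le_mul_measure_ball_add volume hR (hfin · R) hsparse
      (hfin x R')).trans (mul_le_mul_right (volume_ball_add_le_two_pow_mul x hR') _)
    simpa [ENNReal.toReal_mul, ENNReal.toReal_ofReal, hε.le, mul_assoc] using
      ENNReal.toReal_mono (by finiteness) h
  have hle := upDens_le_of_eventually (by positivity) ((eventually_ge_atTop R).mono hcount)
  have hhalf : ε * 2 ^ finrank ℝ E = upDens Γ / 2 := by simp only [ε, pow_succ]; field_simp
  linarith

end FiniteDimensional

/-- a subset of ℤⁿ with positive uniform upper density satisfying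
the weak almost periodicity estimate is a Delone set. -/
theorem wap_subset_int_delone {n : ℕ} (Γ : Set (EuclideanSpace ℝ (Fin n)))
    (hint : ∀ x ∈ Γ, ∀ i : Fin n, ∃ m : ℤ, x i = (m : ℝ))
    (hdens : 0 < upDens Γ)
    (hwap : ∀ ε > 0, ∃ R > 0, ∀ x y : EuclideanSpace ℝ (Fin n),
      ∃ v : EuclideanSpace ℝ (Fin n),
        ((symmDiff (Γ ∩ ball x R) ((fun z => z - v) '' (Γ ∩ ball y R))).ncard : ℝ)
          ≤ ε * (volume (ball (0 : EuclideanSpace ℝ (Fin n)) R)).toReal) :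
    Delone Γ := by
  have hΓ : UnifDisc Γ := unifDisc_of_coord_int hint
  exact ⟨hΓ, relDense_of_wap hΓ.finite_inter_ball hdens hwap⟩
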